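/- arXiv:2001.02386 — 3 statements merged into one kernel-verified Lean document; each statement's English description precedes it below -/
import Mathlib

section
/- With the hypotheses and definitions of a singular extension 0 → D → B → D → 0 with linear section s, and α(g,x) = s(x) − g s(g⁻¹x), βˡ(x₁,x₂) = s(x₁) ⊣ s(x₂) − s(x₁ ⊣ x₂): for g ∈ G with ε(g) = +1 one has x₁ ⊣ α(g,x₂) − α(g, x₁ ⊣ x₂) + α(g,x₁) ⊣ x₂ = βˡ(x₁,x₂) − g βˡ(g⁻¹x₁, g⁻¹x₂), and for ε(g) = −1 the same left side equals βˡ(x₁,x₂) − g βˡ(g⁻¹x₂, g⁻¹x₁). -/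
/-- A dialgebra over `K`: two bilinear associative products `⊣` (`l`) and `⊢` (`r`)
satisfying the three dialgebra axioms. -/
structure Dialgebra (K D : Type*) [Field K] [AddCommGroup D] [Module K D] where
  l : D →ₗ[K] D →ₗ[K] D
  r : D →ₗ[K] D →ₗ[K] D
  l_assoc : ∀ x y z : D, l (l x y) z = l x (l y z)
  r_assoc : ∀ x y z : D, r (r x y) z = r x (r y z)
  ax1 : ∀ x y z : D, l (l x y) z = l x (r y z)
  ax2 : ∀ x y z : D, l (r x y) z = r x (l y z)
  ax3 : ∀ x y z : D, r (l x y) z = r (r x y) z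

/-- An oriented dialgebra over an oriented group `(G, ε)`: a dialgebra with a linear
`G`-action `ρ` such that `g(x ⊣ y) = gx ⊣ gy`, `g(x ⊢ y) = gx ⊢ gy` if `ε g = +1`,
and `g(x ⊣ y) = gy ⊣ gx`, `g(x ⊢ y) = gy ⊢ gx` if `ε g = -1`. -/
structure OrientedDialgebra (K D G : Type*) [Field K] [AddCommGroup D] [Module K D]
    [Group G] (ε : G →* ℤˣ) extends Dialgebra K D where
  ρ : G →* Module.End K D
  orient_l : ∀ (g : G) (x y : D),
    ρ g (l x y) = if ε g = 1 then l (ρ g x) (ρ g y) else l (ρ g y) (ρ g x)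
  orient_r : ∀ (g : G) (x y : D),
    ρ g (r x y) = if ε g = 1 then r (ρ g x) (ρ g y) else r (ρ g y) (ρ g x)

/-- for a singular extension `0 → D → B → D → 0` with section `s`,
`α(g,x) = s(x) − g s(g⁻¹x)` and `βˡ(x₁,x₂) = s(x₁) ⊣ s(x₂) − s(x₁ ⊣ x₂)` satisfy
`x₁ ⊣ α(g,x₂) − α(g, x₁ ⊣ x₂) + α(g,x₁) ⊣ x₂ = βˡ(x₁,x₂) − g βˡ(g⁻¹x₁, g⁻¹x₂)` when
`ε g = +1`, and `= βˡ(x₁,x₂) − g βˡ(g⁻¹x₂, g⁻¹x₁)` when `ε g = -1` (all terms being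
elements of `i(D) ⊆ B`, with the `D`-bimodule action computed in `B` via `s`). -/
theorem singular_extension_one_cocycle_equation
    (K D B G : Type*) [Field K] [AddCommGroup D] [Module K D]
    [AddCommGroup B] [Module K B] [Group G] (ε : G →* ℤˣ)
    (OD : OrientedDialgebra K D G ε) (OB : OrientedDialgebra K B G ε)
    -- `0 → D → B → D → 0` is a `K`-split short exact sequence of `G`-modules:
    (i : D →ₗ[K] B) (p : B →ₗ[K] D)
    (hi_equiv : ∀ (g : G) (x : D), i (OD.ρ g x) = OB.ρ g (i x))
    (hp_equiv : ∀ (g : G) (b : B), p (OB.ρ g b) = OD.ρ g (p b))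
    (hinj : Function.Injective i) (hsurj : Function.Surjective p)
    (hexact : ∀ b : B, p b = 0 ↔ b ∈ Set.range i)
    -- `p` is a homomorphism of oriented dialgebras:
    (hp_l : ∀ b₁ b₂ : B, p (OB.l b₁ b₂) = OD.l (p b₁) (p b₂))
    (hp_r : ∀ b₁ b₂ : B, p (OB.r b₁ b₂) = OD.r (p b₁) (p b₂))
    -- the extension is singular:
    (hz_l : ∀ x₁ x₂ : D, OB.l (i x₁) (i x₂) = 0)
    (hz_r : ∀ x₁ x₂ : D, OB.r (i x₁) (i x₂) = 0)
    (hil : ∀ (x : D) (b : B), OB.l (i x) b = i (OD.l x (p b)))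
    (hir : ∀ (x : D) (b : B), OB.r (i x) b = i (OD.r x (p b)))
    (hli : ∀ (b : B) (x : D), OB.l b (i x) = i (OD.l (p b) x))
    (hri : ∀ (b : B) (x : D), OB.r b (i x) = i (OD.r (p b) x))
    -- `s` is a `K`-linear section of `p`:
    (s : D →ₗ[K] B) (hs : ∀ x : D, p (s x) = x)
    (α : G → D → B)
    (hα : ∀ (g : G) (x : D), α g x = s x - OB.ρ g (s (OD.ρ g⁻¹ x)))
    (βl : D → D → B)
    (hβl : ∀ x₁ x₂ : D, βl x₁ x₂ = OB.l (s x₁) (s x₂) - s (OD.l x₁ x₂)) :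
    ∀ (g : G) (x₁ x₂ : D),
      (ε g = 1 →
        OB.l (s x₁) (α g x₂) - α g (OD.l x₁ x₂) + OB.l (α g x₁) (s x₂)
          = βl x₁ x₂ - OB.ρ g (βl (OD.ρ g⁻¹ x₁) (OD.ρ g⁻¹ x₂))) ∧
      (ε g = -1 →
        OB.l (s x₁) (α g x₂) - α g (OD.l x₁ x₂) + OB.l (α g x₁) (s x₂)
          = βl x₁ x₂ - OB.ρ g (βl (OD.ρ g⁻¹ x₂) (OD.ρ g⁻¹ x₁))) := by
 
  intro g x₁ x₂
  have hgg : ∀ y : D, OD.ρ g (OD.ρ g⁻¹ y) = y := by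
    intro y
    rw [← Module.End.mul_apply, ← map_mul, mul_inv_cancel, map_one, Module.End.one_apply]
  have hpα : ∀ x : D, p (s x - OB.ρ g (s (OD.ρ g⁻¹ x))) = 0 := by
    intro x
    rw [map_sub, hp_equiv, hs, hs, hgg, sub_self]
  have hαα : OB.l (s x₁ - OB.ρ g (s (OD.ρ g⁻¹ x₁)))
      (s x₂ - OB.ρ g (s (OD.ρ g⁻¹ x₂))) = 0 := by
    obtain ⟨y₁, hy₁⟩ := (hexact _).1 (hpα x₁)
    obtain ⟨y₂, hy₂⟩ := (hexact _).1 (hpα x₂)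
    rw [← hy₁, ← hy₂, hz_l]
  constructor
  · intro hε
    have hεinv : ε g⁻¹ = 1 := by rw [map_inv, hε, inv_one]
    rw [hα, hα, hα, hβl, hβl,
      OD.orient_l g⁻¹ x₁ x₂, if_pos hεinv,
      map_sub (OB.ρ g), OB.orient_l g, if_pos hε]
    rw [← sub_eq_zero, ← hαα]
    simp only [map_sub, LinearMap.sub_apply]
    abel
  · intro hε
    have hεinv : ε g⁻¹ = -1 := by rw [map_inv, hε]; decide
    have h1 : ε g⁻¹ ≠ 1 := by rw [hεinv]; decide
    have h2 : ε g ≠ 1 := by rw [hε]; decide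
    rw [hα, hα, hα, hβl, hβl,
      OD.orient_l g⁻¹ x₁ x₂, if_neg h1,
      map_sub (OB.ρ g), OB.orient_l g, if_neg h2]
    rw [← sub_eq_zero, ← hαα]
    simp only [map_sub, LinearMap.sub_apply]
    abel
end

section
/- Let (𝔪ˡ_t, 𝔪ʳ_t, Φ_t) be a one-parameter formal deformation of an oriented dialgebra D over (G, ε), with infinitesimal (m₁ = (mˡ₁, mʳ₁), θ₁) where θ₁(g,x) = −φ₁(g, g⁻¹x). Then for ε(g) = +1: g mˡ₁(y₁,y₂) − θ₁(g, g y₁ ⊣ g y₂) = mˡ₁(g y₁, g y₂) − θ₁(g, g y₁) ⊣ g y₂ − g y₁ ⊣ θ₁(g, g y₂), and for ε(g) = −1: g mˡ₁(y₁,y₂) − θ₁(g, g y₂ ⊣ g y₁) = mˡ₁(g y₂, g y₁) − θ₁(g, g y₂) ⊣ g y₁ − g y₂ ⊣ θ₁(g, g y₁); analogous identities hold for mʳ₁ and ⊢. Together with the cocycle condition on θ₁ and the dialgebra 2-cocycle condition on (mˡ₁, mʳ₁) arising from associativity of the deformed products at order t, this says the infinitesimal is a 1-cocycle in the oriented dialgebra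 cohomology H̃¹_G(D,D). -/
/-- A one-parameter formal deformation `(𝔪ˡ_t, 𝔪ʳ_t, Φ_t)` of an oriented dialgebra `D`
over `(G, ε)`, encoded by the coefficients `mˡᵢ, mʳᵢ ∈ Hom(D ⊗ D, D)` and
`φᵢ ∈ Maps(G, Hom(D, D))` of the formal power series, with all deformation axioms
written coefficientwise. -/
structure Deformation (K D G : Type*) [Field K] [AddCommGroup D] [Module K D] [Group G]
    (ε : G →* ℤˣ) (OD : OrientedDialgebra K D G ε) where
  ml : ℕ → D →ₗ[K] D →ₗ[K] D
  mr : ℕ → D →ₗ[K] D →ₗ[K] D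
  φ : ℕ → G → Module.End K D
  ml_zero : ml 0 = OD.l
  mr_zero : mr 0 = OD.r
  φ_zero : ∀ g : G, φ 0 g = OD.ρ g
  -- `(D[[t]], 𝔪ˡ_t, 𝔪ʳ_t)` is a dialgebra:
  ml_assoc : ∀ (n : ℕ) (x₁ x₂ x₃ : D),
    ∑ p ∈ Finset.HasAntidiagonal.antidiagonal n, ml p.1 (ml p.2 x₁ x₂) x₃
      = ∑ p ∈ Finset.HasAntidiagonal.antidiagonal n, ml p.1 x₁ (ml p.2 x₂ x₃)
  mr_assoc : ∀ (n : ℕ) (x₁ x₂ x₃ : D),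
    ∑ p ∈ Finset.HasAntidiagonal.antidiagonal n, mr p.1 (mr p.2 x₁ x₂) x₃
      = ∑ p ∈ Finset.HasAntidiagonal.antidiagonal n, mr p.1 x₁ (mr p.2 x₂ x₃)
  ax1 : ∀ (n : ℕ) (x₁ x₂ x₃ : D),
    ∑ p ∈ Finset.HasAntidiagonal.antidiagonal n, ml p.1 (ml p.2 x₁ x₂) x₃
      = ∑ p ∈ Finset.HasAntidiagonal.antidiagonal n, ml p.1 x₁ (mr p.2 x₂ x₃)
  ax2 : ∀ (n : ℕ) (x₁ x₂ x₃ : D),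
    ∑ p ∈ Finset.HasAntidiagonal.antidiagonal n, ml p.1 (mr p.2 x₁ x₂) x₃
      = ∑ p ∈ Finset.HasAntidiagonal.antidiagonal n, mr p.1 x₁ (ml p.2 x₂ x₃)
  ax3 : ∀ (n : ℕ) (x₁ x₂ x₃ : D),
    ∑ p ∈ Finset.HasAntidiagonal.antidiagonal n, mr p.1 (ml p.2 x₁ x₂) x₃
      = ∑ p ∈ Finset.HasAntidiagonal.antidiagonal n, mr p.1 (mr p.2 x₁ x₂) x₃
  -- `Φ_t(g₁g₂, x) = Φ_t(g₁, Φ_t(g₂, x))`: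
  φ_mul : ∀ (n : ℕ) (g₁ g₂ : G) (x : D),
    φ n (g₁ * g₂) x = ∑ p ∈ Finset.HasAntidiagonal.antidiagonal n, φ p.1 g₁ (φ p.2 g₂ x)
  -- `Φ_t(g, 𝔪ˡ_t(y₁, y₂))` equals `𝔪ˡ_t(Φ_t(g,y₁), Φ_t(g,y₂))` or
  -- `𝔪ˡ_t(Φ_t(g,y₂), Φ_t(g,y₁))` according to `ε g = ±1`, and similarly for `𝔪ʳ_t`:
  orient_l : ∀ (n : ℕ) (g : G) (y₁ y₂ : D),
    ∑ p ∈ Finset.HasAntidiagonal.antidiagonal n, φ p.1 g (ml p.2 y₁ y₂)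
      = if ε g = 1 then
          ∑ p ∈ Finset.HasAntidiagonal.antidiagonal n, ∑ q ∈ Finset.HasAntidiagonal.antidiagonal p.2, ml p.1 (φ q.1 g y₁) (φ q.2 g y₂)
        else
          ∑ p ∈ Finset.HasAntidiagonal.antidiagonal n, ∑ q ∈ Finset.HasAntidiagonal.antidiagonal p.2, ml p.1 (φ q.1 g y₂) (φ q.2 g y₁)
  orient_r : ∀ (n : ℕ) (g : G) (y₁ y₂ : D),
    ∑ p ∈ Finset.HasAntidiagonal.antidiagonal n, φ p.1 g (mr p.2 y₁ y₂)
      = if ε g = 1 then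
          ∑ p ∈ Finset.HasAntidiagonal.antidiagonal n, ∑ q ∈ Finset.HasAntidiagonal.antidiagonal p.2, mr p.1 (φ q.1 g y₁) (φ q.2 g y₂)
        else
          ∑ p ∈ Finset.HasAntidiagonal.antidiagonal n, ∑ q ∈ Finset.HasAntidiagonal.antidiagonal p.2, mr p.1 (φ q.1 g y₂) (φ q.2 g y₁)

/-! Each identity is the coefficient of `t¹` in one of the deformation axioms. At order one
the antidiagonal sums reduce to the two terms in which a first-order coefficient meets an
undeformed one; the associativity axioms then give the dialgebra 2-cocycle identities at
once, and in the axioms for `Φ_t` one substitutes `φ₁(g, x) = -θ₁(g, g x)`, which turns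
`Φ_t(g₁g₂) = Φ_t(g₁) ∘ Φ_t(g₂)` into the crossed-homomorphism condition and the
orientation axioms into the `ε`-twisted compatibilities. -/

open Finset

theorem Finset.Nat.sum_antidiagonal_one {M : Type*} [AddCommMonoid M] (f : ℕ × ℕ → M) :
    ∑ p ∈ antidiagonal 1, f p = f (0, 1) + f (1, 0) := by
  simp [Finset.Nat.sum_antidiagonal_succ]

theorem dialgebra_cocycle_of_sum_antidiagonal_one {K D : Type*} [Field K] [AddCommGroup D]
    [Module K D] {m m' n n' : ℕ → D →ₗ[K] D →ₗ[K] D} {x₁ x₂ x₃ : D}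
    (h : ∑ p ∈ antidiagonal 1, m p.1 (m' p.2 x₁ x₂) x₃
      = ∑ p ∈ antidiagonal 1, n p.1 x₁ (n' p.2 x₂ x₃)) :
    n 0 x₁ (n' 1 x₂ x₃) - m 1 (m' 0 x₁ x₂) x₃ + n 1 x₁ (n' 0 x₂ x₃)
      - m 0 (m' 1 x₁ x₂) x₃ = 0 := by
  rw [Finset.Nat.sum_antidiagonal_one, Finset.Nat.sum_antidiagonal_one] at h
  linear_combination (norm := module) -h

section Twisting

variable {K D G : Type*} [Field K] [AddCommGroup D] [Module K D] [Group G]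

theorem MonoidHom.inv_apply_apply (ρ : G →* Module.End K D) (g : G) (x : D) :
    ρ g⁻¹ (ρ g x) = x := by
  rw [← Module.End.mul_apply, ← map_mul, inv_mul_cancel, map_one, Module.End.one_apply]

variable {ρ : G →* Module.End K D} {g : G} {φ₁ : Module.End K D} {θ : D → D}

theorem twist_apply_ρ (hθ : ∀ x, θ x = -φ₁ (ρ g⁻¹ x)) (z : D) : θ (ρ g z) = -φ₁ z := by
  rw [hθ, ρ.inv_apply_apply]

theorem twisted_compat_of_order_one (hθ : ∀ x, θ x = -φ₁ (ρ g⁻¹ x))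
    {μ m₁ : D →ₗ[K] D →ₗ[K] D} {y₁ y₂ a b : D}
    (h₀ : ρ g (μ y₁ y₂) = μ (ρ g a) (ρ g b))
    (h₁ : φ₁ (μ y₁ y₂) + ρ g (m₁ y₁ y₂)
      = m₁ (ρ g a) (ρ g b) + μ (ρ g a) (φ₁ b) + μ (φ₁ a) (ρ g b)) :
    ρ g (m₁ y₁ y₂) - θ (μ (ρ g a) (ρ g b))
      = m₁ (ρ g a) (ρ g b) - μ (θ (ρ g a)) (ρ g b) - μ (ρ g a) (θ (ρ g b)) := by
  simp only [← h₀, twist_apply_ρ hθ, map_neg, LinearMap.neg_apply, sub_neg_eq_add]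
  rw [add_comm, h₁]
  abel

end Twisting

section Deformations

variable {K D G : Type*} [Field K] [AddCommGroup D] [Module K D] [Group G]
  {ε : G →* ℤˣ} {OD : OrientedDialgebra K D G ε}

theorem OrientedDialgebra.ρ_l {g : G} {y₁ y₂ a b : D}
    (hab : (a, b) = if ε g = 1 then (y₁, y₂) else (y₂, y₁)) :
    OD.ρ g (OD.l y₁ y₂) = OD.l (OD.ρ g a) (OD.ρ g b) := by
  rw [OD.orient_l]
  split_ifs at hab ⊢ <;> simp_all

theorem OrientedDialgebra.ρ_r {g : G} {y₁ y₂ a b : D}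
    (hab : (a, b) = if ε g = 1 then (y₁, y₂) else (y₂, y₁)) :
    OD.ρ g (OD.r y₁ y₂) = OD.r (OD.ρ g a) (OD.ρ g b) := by
  rw [OD.orient_r]
  split_ifs at hab ⊢ <;> simp_all

namespace Deformation

variable (Df : Deformation K D G ε OD)

theorem φ_one_mul (g₁ g₂ : G) (x : D) :
    Df.φ 1 (g₁ * g₂) x = OD.ρ g₁ (Df.φ 1 g₂ x) + Df.φ 1 g₁ (OD.ρ g₂ x) := by
  simpa [Finset.Nat.sum_antidiagonal_one, Df.φ_zero] using Df.φ_mul 1 g₁ g₂ x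

theorem orient_l_one {g : G} {y₁ y₂ a b : D}
    (hab : (a, b) = if ε g = 1 then (y₁, y₂) else (y₂, y₁)) :
    Df.φ 1 g (OD.l y₁ y₂) + OD.ρ g (Df.ml 1 y₁ y₂)
      = Df.ml 1 (OD.ρ g a) (OD.ρ g b) + OD.l (OD.ρ g a) (Df.φ 1 g b)
        + OD.l (Df.φ 1 g a) (OD.ρ g b) := by
  have h := Df.orient_l 1 g y₁ y₂
  split_ifs at hab h <;>
  · simp only [Prod.mk.injEq] at hab
    obtain ⟨rfl, rfl⟩ := hab
    simpa [Finset.Nat.sum_antidiagonal_one, Df.φ_zero, Df.ml_zero, add_comm, add_left_comm]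
      using h

theorem orient_r_one {g : G} {y₁ y₂ a b : D}
    (hab : (a, b) = if ε g = 1 then (y₁, y₂) else (y₂, y₁)) :
    Df.φ 1 g (OD.r y₁ y₂) + OD.ρ g (Df.mr 1 y₁ y₂)
      = Df.mr 1 (OD.ρ g a) (OD.ρ g b) + OD.r (OD.ρ g a) (Df.φ 1 g b)
        + OD.r (Df.φ 1 g a) (OD.ρ g b) := by
  have h := Df.orient_r 1 g y₁ y₂
  split_ifs at hab h <;>
  · simp only [Prod.mk.injEq] at hab
    obtain ⟨rfl, rfl⟩ := hab
    simpa [Finset.Nat.sum_antidiagonal_one, Df.φ_zero, Df.mr_zero, add_comm, add_left_comm]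
      using h

theorem twist_mul_cocycle {θ₁ : G → D → D}
    (hθ : ∀ (g : G) (x : D), θ₁ g x = -(Df.φ 1 g (OD.ρ g⁻¹ x))) (g₁ g₂ : G) (x : D) :
    θ₁ (g₁ * g₂) (OD.ρ g₁ (OD.ρ g₂ x))
      = OD.ρ g₁ (θ₁ g₂ (OD.ρ g₂ x)) + θ₁ g₁ (OD.ρ g₁ (OD.ρ g₂ x)) := by
  have hρ : OD.ρ g₁ (OD.ρ g₂ x) = OD.ρ (g₁ * g₂) x := by rw [map_mul, Module.End.mul_apply]
  rw [twist_apply_ρ (hθ g₁), twist_apply_ρ (hθ g₂), hρ,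
    twist_apply_ρ (hθ (g₁ * g₂)), Df.φ_one_mul, map_neg]
  abel

end Deformation

end Deformations

theorem infinitesimal_is_one_cocycle_general
    (K D G : Type*) [Field K] [AddCommGroup D] [Module K D] [Group G]
    (ε : G →* ℤˣ) (OD : OrientedDialgebra K D G ε)
    (Df : Deformation K D G ε OD)
    (θ₁ : G → D → D)
    (hθ : ∀ (g : G) (x : D), θ₁ g x = -(Df.φ 1 g (OD.ρ g⁻¹ x))) :
    -- the crossed-homomorphism cocycle condition on `θ₁`:
    (∀ (g₁ g₂ : G) (x : D),
      θ₁ (g₁ * g₂) (OD.ρ g₁ (OD.ρ g₂ x))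
        = OD.ρ g₁ (θ₁ g₂ (OD.ρ g₂ x)) + θ₁ g₁ (OD.ρ g₁ (OD.ρ g₂ x))) ∧
    -- `(mˡ₁, mʳ₁)` is a dialgebra 2-cocycle (the five 3-tree identities):
    (∀ x₁ x₂ x₃ : D,
      OD.r x₁ (Df.mr 1 x₂ x₃) - Df.mr 1 (OD.r x₁ x₂) x₃ + Df.mr 1 x₁ (OD.r x₂ x₃)
        - OD.r (Df.mr 1 x₁ x₂) x₃ = 0) ∧
    (∀ x₁ x₂ x₃ : D,
      OD.r x₁ (Df.mr 1 x₂ x₃) - Df.mr 1 (OD.l x₁ x₂) x₃ + Df.mr 1 x₁ (OD.r x₂ x₃)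
        - OD.r (Df.ml 1 x₁ x₂) x₃ = 0) ∧
    (∀ x₁ x₂ x₃ : D,
      OD.r x₁ (Df.ml 1 x₂ x₃) - Df.ml 1 (OD.r x₁ x₂) x₃ + Df.mr 1 x₁ (OD.l x₂ x₃)
        - OD.l (Df.mr 1 x₁ x₂) x₃ = 0) ∧
    (∀ x₁ x₂ x₃ : D,
      OD.l x₁ (Df.mr 1 x₂ x₃) - Df.ml 1 (OD.l x₁ x₂) x₃ + Df.ml 1 x₁ (OD.r x₂ x₃)
        - OD.l (Df.ml 1 x₁ x₂) x₃ = 0) ∧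
    (∀ x₁ x₂ x₃ : D,
      OD.l x₁ (Df.ml 1 x₂ x₃) - Df.ml 1 (OD.l x₁ x₂) x₃ + Df.ml 1 x₁ (OD.l x₂ x₃)
        - OD.l (Df.ml 1 x₁ x₂) x₃ = 0) ∧
    -- the compatibility identities for `⊣` and `mˡ₁`:
    (∀ (g : G) (y₁ y₂ : D), ε g = 1 →
      OD.ρ g (Df.ml 1 y₁ y₂) - θ₁ g (OD.l (OD.ρ g y₁) (OD.ρ g y₂))
        = Df.ml 1 (OD.ρ g y₁) (OD.ρ g y₂) - OD.l (θ₁ g (OD.ρ g y₁)) (OD.ρ g y₂)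
          - OD.l (OD.ρ g y₁) (θ₁ g (OD.ρ g y₂))) ∧
    (∀ (g : G) (y₁ y₂ : D), ε g = -1 →
      OD.ρ g (Df.ml 1 y₁ y₂) - θ₁ g (OD.l (OD.ρ g y₂) (OD.ρ g y₁))
        = Df.ml 1 (OD.ρ g y₂) (OD.ρ g y₁) - OD.l (θ₁ g (OD.ρ g y₂)) (OD.ρ g y₁)
          - OD.l (OD.ρ g y₂) (θ₁ g (OD.ρ g y₁))) ∧
    -- the compatibility identities for `⊢` and `mʳ₁`:
    (∀ (g : G) (y₁ y₂ : D), ε g = 1 →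
      OD.ρ g (Df.mr 1 y₁ y₂) - θ₁ g (OD.r (OD.ρ g y₁) (OD.ρ g y₂))
        = Df.mr 1 (OD.ρ g y₁) (OD.ρ g y₂) - OD.r (θ₁ g (OD.ρ g y₁)) (OD.ρ g y₂)
          - OD.r (OD.ρ g y₁) (θ₁ g (OD.ρ g y₂))) ∧
    (∀ (g : G) (y₁ y₂ : D), ε g = -1 →
      OD.ρ g (Df.mr 1 y₁ y₂) - θ₁ g (OD.r (OD.ρ g y₂) (OD.ρ g y₁))
        = Df.mr 1 (OD.ρ g y₂) (OD.ρ g y₁) - OD.r (θ₁ g (OD.ρ g y₂)) (OD.ρ g y₁)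
          - OD.r (OD.ρ g y₂) (θ₁ g (OD.ρ g y₁))) := by
  have compat_l {g : G} {y₁ y₂ a b : D}
      (hab : (a, b) = if ε g = 1 then (y₁, y₂) else (y₂, y₁)) :=
    twisted_compat_of_order_one (hθ g) (OD.ρ_l hab) (Df.orient_l_one hab)
  have compat_r {g : G} {y₁ y₂ a b : D}
      (hab : (a, b) = if ε g = 1 then (y₁, y₂) else (y₂, y₁)) :=
    twisted_compat_of_order_one (hθ g) (OD.ρ_r hab) (Df.orient_r_one hab)
  refine ⟨Df.twist_mul_cocycle hθ, fun x₁ x₂ x₃ => ?_, fun x₁ x₂ x₃ => ?_,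
    fun x₁ x₂ x₃ => ?_, fun x₁ x₂ x₃ => ?_, fun x₁ x₂ x₃ => ?_,
    fun g y₁ y₂ hg => compat_l (by simp [hg]), fun g y₁ y₂ hg => compat_l (by simp [hg]),
    fun g y₁ y₂ hg => compat_r (by simp [hg]), fun g y₁ y₂ hg => compat_r (by simp [hg])⟩
  · simpa only [Df.mr_zero] using
      dialgebra_cocycle_of_sum_antidiagonal_one (Df.mr_assoc 1 x₁ x₂ x₃)
  · simpa only [Df.mr_zero, Df.ml_zero] using
      dialgebra_cocycle_of_sum_antidiagonal_one
        ((Df.ax3 1 x₁ x₂ x₃).trans (Df.mr_assoc 1 x₁ x₂ x₃))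
  · simpa only [Df.mr_zero, Df.ml_zero] using
      dialgebra_cocycle_of_sum_antidiagonal_one (Df.ax2 1 x₁ x₂ x₃)
  · simpa only [Df.mr_zero, Df.ml_zero] using
      dialgebra_cocycle_of_sum_antidiagonal_one (Df.ax1 1 x₁ x₂ x₃)
  · simpa only [Df.ml_zero] using
      dialgebra_cocycle_of_sum_antidiagonal_one (Df.ml_assoc 1 x₁ x₂ x₃)

/-- the infinitesimal `(m₁ = (mˡ₁, mʳ₁), θ₁)` of a one-parameter formal
deformation of an oriented dialgebra, where `θ₁(g, x) = −φ₁(g, g⁻¹x)`, is a 1-cocycle in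
the oriented dialgebra cohomology `H̃¹_G(D, D)`: `θ₁` satisfies the crossed-homomorphism
cocycle condition, `(mˡ₁, mʳ₁)` is a dialgebra 2-cocycle, and the `ε`-twisted
compatibility identities between `θ₁` and `(mˡ₁, mʳ₁)` hold. -/
theorem infinitesimal_is_one_cocycle
    (K D G : Type*) [Field K] [AddCommGroup D] [Module K D] [Group G] [CharZero K]
    (ε : G →* ℤˣ) (OD : OrientedDialgebra K D G ε)
    (Df : Deformation K D G ε OD)
    (θ₁ : G → D → D)
    (hθ : ∀ (g : G) (x : D), θ₁ g x = -(Df.φ 1 g (OD.ρ g⁻¹ x))) :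
    -- the crossed-homomorphism cocycle condition on `θ₁`:
    (∀ (g₁ g₂ : G) (x : D),
      θ₁ (g₁ * g₂) (OD.ρ g₁ (OD.ρ g₂ x))
        = OD.ρ g₁ (θ₁ g₂ (OD.ρ g₂ x)) + θ₁ g₁ (OD.ρ g₁ (OD.ρ g₂ x))) ∧
    -- `(mˡ₁, mʳ₁)` is a dialgebra 2-cocycle (the five 3-tree identities):
    (∀ x₁ x₂ x₃ : D,
      OD.r x₁ (Df.mr 1 x₂ x₃) - Df.mr 1 (OD.r x₁ x₂) x₃ + Df.mr 1 x₁ (OD.r x₂ x₃)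
        - OD.r (Df.mr 1 x₁ x₂) x₃ = 0) ∧
    (∀ x₁ x₂ x₃ : D,
      OD.r x₁ (Df.mr 1 x₂ x₃) - Df.mr 1 (OD.l x₁ x₂) x₃ + Df.mr 1 x₁ (OD.r x₂ x₃)
        - OD.r (Df.ml 1 x₁ x₂) x₃ = 0) ∧
    (∀ x₁ x₂ x₃ : D,
      OD.r x₁ (Df.ml 1 x₂ x₃) - Df.ml 1 (OD.r x₁ x₂) x₃ + Df.mr 1 x₁ (OD.l x₂ x₃)
        - OD.l (Df.mr 1 x₁ x₂) x₃ = 0) ∧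
    (∀ x₁ x₂ x₃ : D,
      OD.l x₁ (Df.mr 1 x₂ x₃) - Df.ml 1 (OD.l x₁ x₂) x₃ + Df.ml 1 x₁ (OD.r x₂ x₃)
        - OD.l (Df.ml 1 x₁ x₂) x₃ = 0) ∧
    (∀ x₁ x₂ x₃ : D,
      OD.l x₁ (Df.ml 1 x₂ x₃) - Df.ml 1 (OD.l x₁ x₂) x₃ + Df.ml 1 x₁ (OD.l x₂ x₃)
        - OD.l (Df.ml 1 x₁ x₂) x₃ = 0) ∧
    -- the compatibility identities for `⊣` and `mˡ₁`:
    (∀ (g : G) (y₁ y₂ : D), ε g = 1 →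
      OD.ρ g (Df.ml 1 y₁ y₂) - θ₁ g (OD.l (OD.ρ g y₁) (OD.ρ g y₂))
        = Df.ml 1 (OD.ρ g y₁) (OD.ρ g y₂) - OD.l (θ₁ g (OD.ρ g y₁)) (OD.ρ g y₂)
          - OD.l (OD.ρ g y₁) (θ₁ g (OD.ρ g y₂))) ∧
    (∀ (g : G) (y₁ y₂ : D), ε g = -1 →
      OD.ρ g (Df.ml 1 y₁ y₂) - θ₁ g (OD.l (OD.ρ g y₂) (OD.ρ g y₁))
        = Df.ml 1 (OD.ρ g y₂) (OD.ρ g y₁) - OD.l (θ₁ g (OD.ρ g y₂)) (OD.ρ g y₁)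
          - OD.l (OD.ρ g y₂) (θ₁ g (OD.ρ g y₁))) ∧
    -- the compatibility identities for `⊢` and `mʳ₁`:
    (∀ (g : G) (y₁ y₂ : D), ε g = 1 →
      OD.ρ g (Df.mr 1 y₁ y₂) - θ₁ g (OD.r (OD.ρ g y₁) (OD.ρ g y₂))
        = Df.mr 1 (OD.ρ g y₁) (OD.ρ g y₂) - OD.r (θ₁ g (OD.ρ g y₁)) (OD.ρ g y₂)
          - OD.r (OD.ρ g y₁) (θ₁ g (OD.ρ g y₂))) ∧
    (∀ (g : G) (y₁ y₂ : D), ε g = -1 →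
      OD.ρ g (Df.mr 1 y₁ y₂) - θ₁ g (OD.r (OD.ρ g y₂) (OD.ρ g y₁))
        = Df.mr 1 (OD.ρ g y₂) (OD.ρ g y₁) - OD.r (θ₁ g (OD.ρ g y₂)) (OD.ρ g y₁)
          - OD.r (OD.ρ g y₂) (θ₁ g (OD.ρ g y₁))) :=
  infinitesimal_is_one_cocycle_general K D G ε OD Df θ₁ hθ
end

section
/- Let D be a dialgebra and α : D → D a linear map. Define on B = D ⊕ D the products (x₁,y₁) ⊣ (x₂,y₂) = (x₁ ⊣ y₂ + y₁ ⊣ x₂ + βˡ(y₁,y₂), y₁ ⊣ y₂) and (x₁,y₁) ⊢ (x₂,y₂) = (x₁ ⊢ y₂ + y₁ ⊢ x₂ + βʳ(y₁,y₂), y₁ ⊢ y₂), where (βˡ, βʳ) is a dialgebra 2-cocycle. Then B is a dialgebra (all five dialgebra axioms hold). -/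
/-- for a dialgebra `D` and a dialgebra 2-cocycle `(βˡ, βʳ)`, the space
`B = D ⊕ D` with `(x₁,y₁) ⊣ (x₂,y₂) = (x₁ ⊣ y₂ + y₁ ⊣ x₂ + βˡ(y₁,y₂), y₁ ⊣ y₂)` and
`(x₁,y₁) ⊢ (x₂,y₂) = (x₁ ⊢ y₂ + y₁ ⊢ x₂ + βʳ(y₁,y₂), y₁ ⊢ y₂)` is a dialgebra. -/
theorem two_cocycle_gives_dialgebra_extension
    (K D : Type*) [Field K] [AddCommGroup D] [Module K D]
    (Dg : Dialgebra K D)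
    (βl βr : D →ₗ[K] D →ₗ[K] D)
    -- `(βˡ, βʳ)` is a dialgebra 2-cocycle (the five 3-tree identities):
    (hco1 : ∀ x₁ x₂ x₃ : D,
      Dg.r x₁ (βr x₂ x₃) - βr (Dg.r x₁ x₂) x₃ + βr x₁ (Dg.r x₂ x₃) - Dg.r (βr x₁ x₂) x₃ = 0)
    (hco2 : ∀ x₁ x₂ x₃ : D,
      Dg.r x₁ (βr x₂ x₃) - βr (Dg.l x₁ x₂) x₃ + βr x₁ (Dg.r x₂ x₃) - Dg.r (βl x₁ x₂) x₃ = 0)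
    (hco3 : ∀ x₁ x₂ x₃ : D,
      Dg.r x₁ (βl x₂ x₃) - βl (Dg.r x₁ x₂) x₃ + βr x₁ (Dg.l x₂ x₃) - Dg.l (βr x₁ x₂) x₃ = 0)
    (hco4 : ∀ x₁ x₂ x₃ : D,
      Dg.l x₁ (βr x₂ x₃) - βl (Dg.l x₁ x₂) x₃ + βl x₁ (Dg.r x₂ x₃) - Dg.l (βl x₁ x₂) x₃ = 0)
    (hco5 : ∀ x₁ x₂ x₃ : D,
      Dg.l x₁ (βl x₂ x₃) - βl (Dg.l x₁ x₂) x₃ + βl x₁ (Dg.l x₂ x₃) - Dg.l (βl x₁ x₂) x₃ = 0) :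
    ∃ Bg : Dialgebra K (D × D),
      (∀ x₁ y₁ x₂ y₂ : D, Bg.l (x₁, y₁) (x₂, y₂)
        = (Dg.l x₁ y₂ + Dg.l y₁ x₂ + βl y₁ y₂, Dg.l y₁ y₂)) ∧
      (∀ x₁ y₁ x₂ y₂ : D, Bg.r (x₁, y₁) (x₂, y₂)
        = (Dg.r x₁ y₂ + Dg.r y₁ x₂ + βr y₁ y₂, Dg.r y₁ y₂)) := by
  refine ⟨{
    l := LinearMap.mk₂ K
      (fun a b => (Dg.l a.1 b.2 + Dg.l a.2 b.1 + βl a.2 b.2, Dg.l a.2 b.2))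
      (by intros; simp [Prod.ext_iff]; abel)
      (by intros; simp [Prod.ext_iff, smul_add])
      (by intros; simp [Prod.ext_iff]; abel)
      (by intros; simp [Prod.ext_iff, smul_add])
    r := LinearMap.mk₂ K
      (fun a b => (Dg.r a.1 b.2 + Dg.r a.2 b.1 + βr a.2 b.2, Dg.r a.2 b.2))
      (by intros; simp [Prod.ext_iff]; abel)
      (by intros; simp [Prod.ext_iff, smul_add])
      (by intros; simp [Prod.ext_iff]; abel)
      (by intros; simp [Prod.ext_iff, smul_add])
    l_assoc := by
      intro x y z
      simp only [LinearMap.mk₂_apply, map_add, LinearMap.add_apply, Prod.ext_iff]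
      refine ⟨?_, Dg.l_assoc _ _ _⟩
      linear_combination (norm := module) Dg.l_assoc x.1 y.2 z.2 + Dg.l_assoc x.2 y.1 z.2 +
        Dg.l_assoc x.2 y.2 z.1 - hco5 x.2 y.2 z.2
    r_assoc := by
      intro x y z
      simp only [LinearMap.mk₂_apply, map_add, LinearMap.add_apply, Prod.ext_iff]
      refine ⟨?_, Dg.r_assoc _ _ _⟩
      linear_combination (norm := module) Dg.r_assoc x.1 y.2 z.2 + Dg.r_assoc x.2 y.1 z.2 +
        Dg.r_assoc x.2 y.2 z.1 - hco1 x.2 y.2 z.2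
    ax1 := by
      intro x y z
      simp only [LinearMap.mk₂_apply, map_add, LinearMap.add_apply, Prod.ext_iff]
      refine ⟨?_, Dg.ax1 _ _ _⟩
      linear_combination (norm := module) Dg.ax1 x.1 y.2 z.2 + Dg.ax1 x.2 y.1 z.2 +
        Dg.ax1 x.2 y.2 z.1 - hco4 x.2 y.2 z.2
    ax2 := by
      intro x y z
      simp only [LinearMap.mk₂_apply, map_add, LinearMap.add_apply, Prod.ext_iff]
      refine ⟨?_, Dg.ax2 _ _ _⟩
      linear_combination (norm := module) Dg.ax2 x.1 y.2 z.2 + Dg.ax2 x.2 y.1 z.2 +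
        Dg.ax2 x.2 y.2 z.1 - hco3 x.2 y.2 z.2
    ax3 := by
      intro x y z
      simp only [LinearMap.mk₂_apply, map_add, LinearMap.add_apply, Prod.ext_iff]
      refine ⟨?_, Dg.ax3 _ _ _⟩
      linear_combination (norm := module) Dg.ax3 x.1 y.2 z.2 + Dg.ax3 x.2 y.1 z.2 +
        Dg.ax3 x.2 y.2 z.1 + hco1 x.2 y.2 z.2 - hco2 x.2 y.2 z.2 }, fun _ _ _ _ => rfl, fun _ _ _ _ => rfl⟩
end
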